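/- Let Φ : D² → ℝ^m be a smooth immersion and let q^{ij} (i,j ∈ {1,2}) be smooth real-valued functions on D² which are symmetric (q^{12} = q^{21}), traceless (g_{ij} q^{ij} = 0), and transverse (for i = 1,2: |g|^{−1/2} ∂_j( |g|^{1/2} q^{ij} ) + Γ^i_{jk} q^{jk} = 0). Then, pointwise on D², |g|^{−1/2} ∂_j( |g|^{1/2} q^{ij} ∂_iΦ ) = q^{ij} h_{ij} = q^{ij} ( h_{ij} − H g_{ij} ); that is, the covariant divergence of the vector field q^{ij}∂_iΦ equals the contraction of q with the trace-free part of the second fundamental form. -/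

import Mathlib

noncomputable section

open scoped RealInnerProductSpace

abbrev E2 : Type := EuclideanSpace ℝ (Fin 2)

/-- Partial derivative of a map on `ℝ²` in the `i`-th coordinate direction. -/
def pd {F : Type*} [NormedAddCommGroup F] [NormedSpace ℝ F]
    (i : Fin 2) (f : E2 → F) (x : E2) : F :=
  fderiv ℝ f x (EuclideanSpace.single i 1)

variable {m : ℕ}

/-- Induced metric. -/
def gm (Φ : E2 → EuclideanSpace ℝ (Fin m)) (x : E2) (i j : Fin 2) : ℝ :=
  ⟪pd i Φ x, pd j Φ x⟫

/-- Determinant of the induced metric. -/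
def gdet (Φ : E2 → EuclideanSpace ℝ (Fin m)) (x : E2) : ℝ :=
  gm Φ x 0 0 * gm Φ x 1 1 - gm Φ x 0 1 * gm Φ x 1 0

/-- Inverse metric. -/
def ginv (Φ : E2 → EuclideanSpace ℝ (Fin m)) (x : E2) (i j : Fin 2) : ℝ :=
  (Matrix.of (gm Φ x))⁻¹ i j

/-- Orthogonal projection onto the normal space of `Φ` at `x`. -/
def piN (Φ : E2 → EuclideanSpace ℝ (Fin m)) (x : E2) (v : EuclideanSpace ℝ (Fin m)) :
    EuclideanSpace ℝ (Fin m) :=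
  (Submodule.orthogonalProjection ((Submodule.span ℝ {pd 0 Φ x, pd 1 Φ x})ᗮ) v :
    EuclideanSpace ℝ (Fin m))

/-- Second fundamental form. -/
def sff (Φ : E2 → EuclideanSpace ℝ (Fin m)) (x : E2) (i j : Fin 2) :
    EuclideanSpace ℝ (Fin m) :=
  piN Φ x (pd i (pd j Φ) x)

/-- Mean curvature vector. -/
def mcv (Φ : E2 → EuclideanSpace ℝ (Fin m)) (x : E2) : EuclideanSpace ℝ (Fin m) :=
  (1/2 : ℝ) • ∑ i : Fin 2, ∑ j : Fin 2, ginv Φ x i j • sff Φ x i j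

/-- Normal Laplacian. -/
def nlap (Φ : E2 → EuclideanSpace ℝ (Fin m)) (N : E2 → EuclideanSpace ℝ (Fin m)) (x : E2) :
    EuclideanSpace ℝ (Fin m) :=
  (Real.sqrt (gdet Φ x))⁻¹ •
    piN Φ x (∑ j : Fin 2, pd j
      (fun y => Real.sqrt (gdet Φ y) • ∑ k : Fin 2, ginv Φ y j k • piN Φ y (pd k N y)) x)

/-- Willmore operator. -/
def willmoreOp (Φ : E2 → EuclideanSpace ℝ (Fin m)) (x : E2) : EuclideanSpace ℝ (Fin m) :=
  nlap Φ (mcv Φ) x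
    + ∑ i : Fin 2, ∑ j : Fin 2, ∑ k : Fin 2, ∑ l : Fin 2,
        (ginv Φ x i k * ginv Φ x j l * ⟪sff Φ x k l, mcv Φ x⟫) • sff Φ x i j
    - (2 * ‖mcv Φ x‖ ^ 2) • mcv Φ x

/-- Stress tensor. -/
def stress (Φ : E2 → EuclideanSpace ℝ (Fin m)) (x : E2) (j : Fin 2) :
    EuclideanSpace ℝ (Fin m) :=
  ∑ k : Fin 2, ginv Φ x j k •
    (pd k (mcv Φ) x - (2:ℝ) • piN Φ x (pd k (mcv Φ) x) + (‖mcv Φ x‖ ^ 2) • pd k Φ x)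

/-- The open unit disk in `ℝ²`. -/
def Disk : Set E2 := Metric.ball 0 1

/-- Immersion condition on the disk. -/
def ImmersedOn (Φ : E2 → EuclideanSpace ℝ (Fin m)) : Prop :=
  ∀ x ∈ Disk, LinearIndependent ℝ ![pd 0 Φ x, pd 1 Φ x]


open scoped RealInnerProductSpace in
/-- Christoffel symbols of the induced metric: `Γ^k_{ij} = g^{kl}(∂_i∂_jΦ · ∂_lΦ)`. -/
def christoffel {m : ℕ} (Φ : E2 → EuclideanSpace ℝ (Fin m)) (x : E2) (k i j : Fin 2) : ℝ :=
  ∑ l : Fin 2, ginv Φ x k l * ⟪pd i (pd j Φ) x, pd l Φ x⟫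

end

section Aux

noncomputable section
open scoped RealInnerProductSpace
variable {m : ℕ}

private lemma pd_contDiffOn {Φ : E2 → EuclideanSpace ℝ (Fin m)} (hΦ : ContDiffOn ℝ (⊤ : ℕ∞) Φ Disk)
    (i : Fin 2) : ContDiffOn ℝ (⊤ : ℕ∞) (pd i Φ) Disk := by
  have h1 : ContDiffOn ℝ (⊤ : ℕ∞) (fderiv ℝ Φ) Disk :=
    hΦ.fderiv_of_isOpen Metric.isOpen_ball (by simp)
  exact h1.clm_apply contDiffOn_const

private lemma gdet_pos' {Φ : E2 → EuclideanSpace ℝ (Fin m)} {x : E2}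
    (hli : LinearIndependent ℝ ![pd 0 Φ x, pd 1 Φ x]) : 0 < gdet Φ x := by
  rw [LinearIndependent.pair_iff] at hli
  set v0 := pd 0 Φ x
  set v1 := pd 1 Φ x
  have h1 : v1 ≠ 0 := by
    intro h
    simpa using (hli 0 1 (by simp [h])).2
  have hlt1 : ⟪v0, v1⟫ < ‖v0‖ * ‖v1‖ := by
    refine inner_lt_norm_mul_iff_real.2 fun h => ?_
    have := (hli ‖v1‖ (-‖v0‖) (by rw [neg_smul, ← h]; abel)).1
    exact h1 (norm_eq_zero.1 this)
  have hlt2 : ⟪-v0, v1⟫ < ‖-v0‖ * ‖v1‖ := by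
    refine inner_lt_norm_mul_iff_real.2 fun h => ?_
    rw [norm_neg, smul_neg] at h
    have := (hli ‖v1‖ ‖v0‖ (by rw [← neg_eq_iff_eq_neg.2 h.symm]; abel)).1
    exact h1 (norm_eq_zero.1 this)
  rw [inner_neg_left, norm_neg] at hlt2
  have e0 : gm Φ x 0 0 = ‖v0‖ * ‖v0‖ := real_inner_self_eq_norm_mul_norm v0
  have e1 : gm Φ x 1 1 = ‖v1‖ * ‖v1‖ := real_inner_self_eq_norm_mul_norm v1
  have e2 : gm Φ x 1 0 = gm Φ x 0 1 := real_inner_comm _ _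
  have e3 : gm Φ x 0 1 = ⟪v0, v1⟫ := rfl
  rw [gdet, e0, e1, e2, e3]
  nlinarith [hlt1, hlt2]

private lemma pd_add' {F : Type*} [NormedAddCommGroup F] [NormedSpace ℝ F]
    {V W : E2 → F} {x : E2} (hV : DifferentiableAt ℝ V x) (hW : DifferentiableAt ℝ W x)
    (j : Fin 2) : pd j (fun y => V y + W y) x = pd j V x + pd j W x := by
  unfold pd
  rw [fderiv_fun_add hV hW]
  simp

private lemma pd_smul' {F : Type*} [NormedAddCommGroup F] [NormedSpace ℝ F]
    {f : E2 → ℝ} {V : E2 → F} {x : E2}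
    (hf : DifferentiableAt ℝ f x) (hV : DifferentiableAt ℝ V x)
    (j : Fin 2) : pd j (fun y => f y • V y) x = f x • pd j V x + pd j f x • V x := by
  unfold pd
  rw [fderiv_fun_smul hf hV]
  simp

end
end Aux

open scoped RealInnerProductSpace

/-- the covariant divergence of `q^{ij}∂_iΦ` equals the contraction of `q`
with the trace-free part of the second fundamental form. -/
theorem divergence_of_transverse_traceless_contraction {m : ℕ} (hm : 3 ≤ m)
    (Φ : E2 → EuclideanSpace ℝ (Fin m)) (q : Fin 2 → Fin 2 → E2 → ℝ)
    (hΦ : ContDiffOn ℝ (⊤ : ℕ∞) Φ Disk) (himm : ImmersedOn Φ)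
    (hq : ∀ i j : Fin 2, ContDiffOn ℝ (⊤ : ℕ∞) (q i j) Disk)
    (hsymm : ∀ x ∈ Disk, q 0 1 x = q 1 0 x)
    (htraceless : ∀ x ∈ Disk, ∑ i : Fin 2, ∑ j : Fin 2, gm Φ x i j * q i j x = 0)
    (htransverse : ∀ x ∈ Disk, ∀ i : Fin 2,
      (Real.sqrt (gdet Φ x))⁻¹ *
          (∑ j : Fin 2, pd j (fun y => Real.sqrt (gdet Φ y) * q i j y) x)
        + ∑ j : Fin 2, ∑ k : Fin 2, christoffel Φ x i j k * q j k x = 0) :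
    ∀ x ∈ Disk,
      (Real.sqrt (gdet Φ x))⁻¹ •
          (∑ j : Fin 2, pd j (fun y =>
            Real.sqrt (gdet Φ y) • ∑ i : Fin 2, q i j y • pd i Φ y) x)
        = ∑ i : Fin 2, ∑ j : Fin 2, q i j x • sff Φ x i j
      ∧ ∑ i : Fin 2, ∑ j : Fin 2, q i j x • sff Φ x i j
        = ∑ i : Fin 2, ∑ j : Fin 2, q i j x • (sff Φ x i j - gm Φ x i j • mcv Φ x) := by
  intro x hx
  have hxn : Disk ∈ nhds x := Metric.isOpen_ball.mem_nhds hx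
  have hpos : 0 < gdet Φ x := gdet_pos' (himm x hx)
  have hpdC : ∀ i : Fin 2, ContDiffAt ℝ (⊤ : ℕ∞) (pd i Φ) x :=
    fun i => (pd_contDiffOn hΦ i).contDiffAt hxn
  have hqC : ∀ i j : Fin 2, ContDiffAt ℝ (⊤ : ℕ∞) (q i j) x :=
    fun i j => (hq i j).contDiffAt hxn
  have hgdC : ContDiffAt ℝ (⊤ : ℕ∞) (gdet Φ) x := by
    have h : ∀ i j : Fin 2, ContDiffAt ℝ (⊤ : ℕ∞) (fun y => gm Φ y i j) x := fun i j =>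
      ContDiffAt.inner ℝ (hpdC i) (hpdC j)
    exact ((h 0 0).mul (h 1 1)).sub ((h 0 1).mul (h 1 0))
  have hsqC : ContDiffAt ℝ (⊤ : ℕ∞) (fun y => Real.sqrt (gdet Φ y)) x := hgdC.sqrt hpos.ne'
  have hsne : Real.sqrt (gdet Φ x) ≠ 0 := (Real.sqrt_pos.2 hpos).ne'
  have hinv1 : (Real.sqrt (gdet Φ x))⁻¹ * Real.sqrt (gdet Φ x) = 1 := inv_mul_cancel₀ hsne
  have dq : ∀ i j : Fin 2,
      DifferentiableAt ℝ (fun y => Real.sqrt (gdet Φ y) * q i j y) x :=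
    fun i j => (hsqC.mul (hqC i j)).differentiableAt (by simp)
  have dpd : ∀ i : Fin 2, DifferentiableAt ℝ (pd i Φ) x :=
    fun i => (hpdC i).differentiableAt (by simp)
  -- product rule for each term of the divergence
  have hder : ∀ j : Fin 2,
      pd j (fun y => Real.sqrt (gdet Φ y) • ∑ i : Fin 2, q i j y • pd i Φ y) x
      = (Real.sqrt (gdet Φ x) * q 0 j x) • pd j (pd 0 Φ) x
        + (Real.sqrt (gdet Φ x) * q 1 j x) • pd j (pd 1 Φ) x
        + pd j (fun y => Real.sqrt (gdet Φ y) * q 0 j y) x • pd 0 Φ x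
        + pd j (fun y => Real.sqrt (gdet Φ y) * q 1 j y) x • pd 1 Φ x := by
    intro j
    have hfe : (fun y => Real.sqrt (gdet Φ y) • ∑ i : Fin 2, q i j y • pd i Φ y)
        = fun y => (fun z => Real.sqrt (gdet Φ z) * q 0 j z) y • pd 0 Φ y
            + (fun z => Real.sqrt (gdet Φ z) * q 1 j z) y • pd 1 Φ y := by
      funext y
      simp [Fin.sum_univ_two, smul_add, smul_smul]
    rw [hfe, pd_add' ((dq 0 j).fun_smul (dpd 0)) ((dq 1 j).fun_smul (dpd 1)),
        pd_smul' (dq 0 j) (dpd 0), pd_smul' (dq 1 j) (dpd 1)]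
    abel
  -- inverse metric identity
  have hdet : (Matrix.of (gm Φ x)).det = gdet Φ x := by
    rw [Matrix.det_fin_two]; rfl
  have hmulinv : (Matrix.of (gm Φ x))⁻¹ * Matrix.of (gm Φ x) = 1 :=
    Matrix.nonsing_inv_mul _ (by rw [hdet]; exact isUnit_iff_ne_zero.2 hpos.ne')
  have hid : ∀ k j : Fin 2,
      ginv Φ x k 0 * gm Φ x 0 j + ginv Φ x k 1 * gm Φ x 1 j
        = if k = j then 1 else 0 := by
    intro k j
    have h := congrFun (congrFun hmulinv k) j
    simpa [Matrix.mul_apply, Fin.sum_univ_two, ginv, Matrix.one_apply] using h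
  have hgmc : gm Φ x 1 0 = gm Φ x 0 1 := real_inner_comm _ _
  -- tangential/normal decomposition
  have hproj : ∀ w : EuclideanSpace ℝ (Fin m),
      w = (ginv Φ x 0 0 * ⟪w, pd 0 Φ x⟫ + ginv Φ x 0 1 * ⟪w, pd 1 Φ x⟫) • pd 0 Φ x
          + (ginv Φ x 1 0 * ⟪w, pd 0 Φ x⟫ + ginv Φ x 1 1 * ⟪w, pd 1 Φ x⟫) • pd 1 Φ x
          + piN Φ x w := by
    intro w
    set K := Submodule.span ℝ {pd 0 Φ x, pd 1 Φ x} with hK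
    have hsum : (Submodule.orthogonalProjection K w : EuclideanSpace ℝ (Fin m))
        + (Submodule.orthogonalProjection Kᗮ w : EuclideanSpace ℝ (Fin m)) = w :=
      K.starProjection_add_starProjection_orthogonal w
    obtain ⟨a, b, hab⟩ := Submodule.mem_span_pair.1 (Submodule.orthogonalProjection K w).2
    have hmem : ∀ l : Fin 2, pd l Φ x ∈ K := by
      intro l
      fin_cases l
      · exact Submodule.subset_span (by simp)
      · exact Submodule.subset_span (by simp)
    have hinner : ∀ l : Fin 2, ⟪w, pd l Φ x⟫ = a * gm Φ x 0 l + b * gm Φ x 1 l := by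
      intro l
      have hz : ⟪(Submodule.orthogonalProjection Kᗮ w : EuclideanSpace ℝ (Fin m)), pd l Φ x⟫ = 0 := by
        rw [real_inner_comm]
        exact Submodule.inner_right_of_mem_orthogonal (hmem l) (Submodule.orthogonalProjection Kᗮ w).2
      calc ⟪w, pd l Φ x⟫
          = ⟪((Submodule.orthogonalProjection K w : EuclideanSpace ℝ (Fin m))
              + (Submodule.orthogonalProjection Kᗮ w : EuclideanSpace ℝ (Fin m))), pd l Φ x⟫ := by
            rw [hsum]
        _ = ⟪(Submodule.orthogonalProjection K w : EuclideanSpace ℝ (Fin m)), pd l Φ x⟫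
              + ⟪(Submodule.orthogonalProjection Kᗮ w : EuclideanSpace ℝ (Fin m)), pd l Φ x⟫ :=
            inner_add_left _ _ _
        _ = a * gm Φ x 0 l + b * gm Φ x 1 l := by
            rw [hz, add_zero, ← hab, inner_add_left, real_inner_smul_left,
              real_inner_smul_left]
            rfl
    have hc0 : ginv Φ x 0 0 * ⟪w, pd 0 Φ x⟫ + ginv Φ x 0 1 * ⟪w, pd 1 Φ x⟫ = a := by
      have h00 := hid 0 0
      have h01 := hid 0 1
      rw [if_pos rfl] at h00
      rw [if_neg (by decide)] at h01
      rw [hinner 0, hinner 1, hgmc] at *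
      linear_combination a * h00 + b * h01
    have hc1 : ginv Φ x 1 0 * ⟪w, pd 0 Φ x⟫ + ginv Φ x 1 1 * ⟪w, pd 1 Φ x⟫ = b := by
      have h10 := hid 1 0
      have h11 := hid 1 1
      rw [if_neg (by decide)] at h10
      rw [if_pos rfl] at h11
      rw [hinner 0, hinner 1, hgmc] at *
      linear_combination a * h10 + b * h11
    rw [hc0, hc1, hab]
    exact hsum.symm
  have hdec : ∀ i j : Fin 2, pd j (pd i Φ) x
      = christoffel Φ x 0 j i • pd 0 Φ x + christoffel Φ x 1 j i • pd 1 Φ x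
        + sff Φ x j i := by
    intro i j
    have h := hproj (pd j (pd i Φ) x)
    simpa [christoffel, sff, Fin.sum_univ_two] using h
  -- transversality, rearranged
  have hq10 : q 1 0 x = q 0 1 x := (hsymm x hx).symm
  have htr : ∀ i : Fin 2,
      (Real.sqrt (gdet Φ x))⁻¹ * pd 0 (fun y => Real.sqrt (gdet Φ y) * q i 0 y) x
        + (Real.sqrt (gdet Φ x))⁻¹ * pd 1 (fun y => Real.sqrt (gdet Φ y) * q i 1 y) x
      = -(christoffel Φ x i 0 0 * q 0 0 x + christoffel Φ x i 0 1 * q 0 1 x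
          + christoffel Φ x i 1 0 * q 0 1 x + christoffel Φ x i 1 1 * q 1 1 x) := by
    intro i
    have h := htransverse x hx i
    simp only [Fin.sum_univ_two] at h
    rw [hq10] at h
    linear_combination h
  simp only [Fin.sum_univ_two] at hder
  have htr0 := htr 0
  have htr1 := htr 1
  constructor
  · simp only [Fin.sum_univ_two]
    rw [hder 0, hder 1, hdec 0 0, hdec 0 1, hdec 1 0, hdec 1 1, hq10]
    match_scalars
    · linear_combination htr0 + (q 0 0 x * christoffel Φ x 0 0 0
        + q 0 1 x * christoffel Φ x 0 0 1 + q 0 1 x * christoffel Φ x 0 1 0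
        + q 1 1 x * christoffel Φ x 0 1 1) * hinv1
    · linear_combination htr1 + (q 0 0 x * christoffel Φ x 1 0 0
        + q 0 1 x * christoffel Φ x 1 0 1 + q 0 1 x * christoffel Φ x 1 1 0
        + q 1 1 x * christoffel Φ x 1 1 1) * hinv1
    · linear_combination q 0 0 x * hinv1
    · linear_combination q 0 1 x * hinv1
    · linear_combination q 0 1 x * hinv1
    · linear_combination q 1 1 x * hinv1
  · have ht := htraceless x hx
    simp only [Fin.sum_univ_two] at ht ⊢
    match_scalars
    · ring
    · ring
    · ring
    · ring
    · linear_combination ht
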